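/- arXiv:1101.5741 — 5 statements merged into one kernel-verified Lean document; each statement's English description precedes it below -/
import Mathlib

section
/- Let A_n be the free associative algebra over ℂ on generators x_1,…,x_n, with commutator bracket [a,b] = ab − ba, and let L_i be its lower central series (L_1 = A_n, L_{i+1} = span of [a,l] for a ∈ A_n, l ∈ L_i). Then for every i ≥ 1, the left ideal A_n·L_i generated by L_i is a two-sided ideal; that is, A_n·L_i·A_n = A_n·L_i. -/
/-- The lower central series of the free algebra `A_n = ℂ⟨x_1,…,x_n⟩`:
`L 1 = A_n`, and `L (i+1)` is the linear span of commutators `[a, l] = a*l - l*a`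
with `a ∈ A_n`, `l ∈ L i`.  (We set `L 0 = A_n` as a junk value.) -/
noncomputable def lcs (n : ℕ) : ℕ → Submodule ℂ (FreeAlgebra ℂ (Fin n))
  | 0 => ⊤
  | 1 => ⊤
  | (i + 2) =>
      Submodule.span ℂ
        {x | ∃ a : FreeAlgebra ℂ (Fin n), ∃ l ∈ lcs n (i + 1), x = a * l - l * a}

/-- `M i = A_n · L_i · A_n`, the two-sided ideal generated by `L i`, as a submodule. -/
noncomputable def Mideal (n i : ℕ) : Submodule ℂ (FreeAlgebra ℂ (Fin n)) :=
  ⊤ * lcs n i * ⊤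

lemma lcs_antitone (n : ℕ) : ∀ j, lcs n (j + 2) ≤ lcs n (j + 1)
  | 0 => le_top
  | (k + 1) => by
    show lcs n (k + 3) ≤ lcs n (k + 2)
    rw [show lcs n (k + 3) = Submodule.span ℂ
      {x | ∃ a : FreeAlgebra ℂ (Fin n), ∃ l ∈ lcs n (k + 2), x = a * l - l * a} from rfl]
    apply Submodule.span_le.2
    rintro x ⟨a, l, hl, rfl⟩
    have hl' : l ∈ lcs n (k + 1) := lcs_antitone n k hl
    rw [show lcs n (k + 2) = Submodule.span ℂ
      {x | ∃ a : FreeAlgebra ℂ (Fin n), ∃ l ∈ lcs n (k + 1), x = a * l - l * a} from rfl]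
    exact Submodule.subset_span ⟨a, l, hl', rfl⟩

lemma key (n j : ℕ) : lcs n (j + 1) * ⊤ ≤ ⊤ * lcs n (j + 1) := by
  rw [Submodule.mul_le]
  intro l hl a _
  have h1 : a * l ∈ ⊤ * lcs n (j + 1) := Submodule.mul_mem_mul trivial hl
  have h2 : a * l - l * a ∈ lcs n (j + 2) := by
    rw [show lcs n (j + 2) = Submodule.span ℂ
      {x | ∃ a : FreeAlgebra ℂ (Fin n), ∃ l ∈ lcs n (j + 1), x = a * l - l * a} from rfl]
    exact Submodule.subset_span ⟨a, l, hl, rfl⟩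
  have h3 : a * l - l * a ∈ ⊤ * lcs n (j + 1) := by
    have := Submodule.mul_mem_mul (Submodule.mem_top (x := (1 : FreeAlgebra ℂ (Fin n))))
      (lcs_antitone n j h2)
    simpa using this
  have heq : l * a = a * l - (a * l - l * a) := by abel
  rw [heq]
  exact Submodule.sub_mem _ h1 h3

/-- The left ideal `A_n · L_i` is already two-sided: `A_n · L_i · A_n = A_n · L_i`. -/
theorem left_ideal_is_two_sided (n : ℕ) (i : ℕ) (hi : 1 ≤ i) :
    ⊤ * lcs n i * (⊤ : Submodule ℂ (FreeAlgebra ℂ (Fin n))) = ⊤ * lcs n i := by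
  obtain ⟨j, rfl⟩ : ∃ j, i = j + 1 := ⟨i - 1, (Nat.succ_pred_eq_of_pos hi).symm⟩
  apply le_antisymm
  · calc ⊤ * lcs n (j + 1) * ⊤ = ⊤ * (lcs n (j + 1) * ⊤) := mul_assoc _ _ _
      _ ≤ ⊤ * (⊤ * lcs n (j + 1)) := mul_le_mul_right (key n j) _
      _ = ⊤ * ⊤ * lcs n (j + 1) := (mul_assoc _ _ _).symm
      _ ≤ ⊤ * lcs n (j + 1) := mul_le_mul_left le_top _
  · intro x hx
    have := Submodule.mul_mem_mul hx (Submodule.mem_top (x := (1 : FreeAlgebra ℂ (Fin n))))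
    simpa using this
end

section
/- Let A_n be the free associative algebra over ℂ on generators x_1,…,x_n with lower central series L_i. For every i ≥ 2, every b ∈ L_{i−1}, and all a, x ∈ A_n, the element [xa, b] − x[a, b] − a[x, b] lies in L_{i+1}. -/
/-- For `i ≥ 2`, `b ∈ L_{i-1}` and `a, x ∈ A_n`, the element
`[xa, b] - x[a, b] - a[x, b]` lies in `L_{i+1}`. -/
theorem comm_expansion_mem_lcs (n : ℕ) (i : ℕ) (hi : 2 ≤ i)
    (b : FreeAlgebra ℂ (Fin n)) (hb : b ∈ lcs n (i - 1))
    (a x : FreeAlgebra ℂ (Fin n)) :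
    ((x * a) * b - b * (x * a)) - x * (a * b - b * a) - a * (x * b - b * x)
      ∈ lcs n (i + 1) := by
  obtain ⟨j, rfl⟩ : ∃ j, i = j + 2 := ⟨i - 2, by omega⟩
  have hb' : b ∈ lcs n (j + 1) := by simpa using hb
  set c := x * b - b * x with hc
  have hcmem : c ∈ lcs n (j + 2) := Submodule.subset_span ⟨x, b, hb', rfl⟩
  have hgen : a * c - c * a ∈ lcs n (j + 3) := Submodule.subset_span ⟨a, c, hcmem, rfl⟩
  have heq : ((x * a) * b - b * (x * a)) - x * (a * b - b * a) - a * (x * b - b * x)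
      = -(a * c - c * a) := by rw [hc]; noncomm_ring
  rw [heq]
  exact neg_mem hgen
end

section
/- Let A_n be the free associative algebra over ℂ on generators x_1,…,x_n with lower central series L_i. For every i ≥ 2, every b ∈ L_{i−1}, and all a, x, y ∈ A_n, the element [xya, b] − xy[a, b] − xa[y, b] − ya[x, b] lies in the left ideal A_n·L_{i+1}. -/
/-- For `i ≥ 2`, `b ∈ L_{i-1}` and `a, x, y ∈ A_n`, the element
`[xya, b] - xy[a, b] - xa[y, b] - ya[x, b]` lies in the left ideal `A_n · L_{i+1}`
(the submodule `⊤ * lcs n (i+1)`). -/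
theorem comm_expansion_mem_left_ideal (n : ℕ) (i : ℕ) (hi : 2 ≤ i)
    (b : FreeAlgebra ℂ (Fin n)) (hb : b ∈ lcs n (i - 1))
    (a x y : FreeAlgebra ℂ (Fin n)) :
    ((x * y * a) * b - b * (x * y * a)) - x * y * (a * b - b * a)
        - x * a * (y * b - b * y) - y * a * (x * b - b * x)
      ∈ ⊤ * lcs n (i + 1) := by
  obtain ⟨k, rfl⟩ : ∃ k, i = k + 2 := ⟨i - 2, by omega⟩
  have hb' : b ∈ lcs n (k + 1) := hb
  have h1 : (y * b - b * y) ∈ lcs n (k + 2) := by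
    rw [lcs]; exact Submodule.subset_span ⟨y, b, hb', rfl⟩
  have h2 : (x * b - b * x) ∈ lcs n (k + 2) := by
    rw [lcs]; exact Submodule.subset_span ⟨x, b, hb', rfl⟩
  have h3 : (a * (y * b - b * y) - (y * b - b * y) * a) ∈ lcs n (k + 3) := by
    rw [lcs]; exact Submodule.subset_span ⟨a, _, h1, rfl⟩
  have h4 : ((y * a) * (x * b - b * x) - (x * b - b * x) * (y * a)) ∈ lcs n (k + 3) := by
    rw [lcs]; exact Submodule.subset_span ⟨y * a, _, h2, rfl⟩
  have hmem :
      x * (-(a * (y * b - b * y) - (y * b - b * y) * a))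
        + (1 : FreeAlgebra ℂ (Fin n)) *
          (-((y * a) * (x * b - b * x) - (x * b - b * x) * (y * a)))
        ∈ ⊤ * lcs n (k + 3) := by
    refine Submodule.add_mem _ ?_ ?_
    · exact Submodule.mul_mem_mul Submodule.mem_top (Submodule.neg_mem _ h3)
    · exact Submodule.mul_mem_mul Submodule.mem_top (Submodule.neg_mem _ h4)
  have : (k + 2) + 1 = k + 3 := rfl
  rw [this]
  convert hmem using 1
  noncomm_ring
end

section
/- Let A_n be the free associative algebra over ℂ on generators x_1,…,x_n with lower central series L_i. For every i ≥ 2, every b ∈ L_{i−1}, and all a, x, y ∈ A_n, the element yx[a, b] − x[ya, b] − y[xa, b] + [xya, b] lies in the left ideal A_n·L_{i+1}. -/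
/-- For `i ≥ 2`, `b ∈ L_{i-1}` and `a, x, y ∈ A_n`, the element
`yx[a, b] - x[ya, b] - y[xa, b] + [xya, b]` lies in the left ideal `A_n · L_{i+1}`
(the submodule `⊤ * lcs n (i+1)`). -/
theorem key_lemma_mem_left_ideal (n : ℕ) (i : ℕ) (hi : 2 ≤ i)
    (b : FreeAlgebra ℂ (Fin n)) (hb : b ∈ lcs n (i - 1))
    (a x y : FreeAlgebra ℂ (Fin n)) :
    y * x * (a * b - b * a) - x * ((y * a) * b - b * (y * a))
        - y * ((x * a) * b - b * (x * a)) + ((x * y * a) * b - b * (x * y * a))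
      ∈ ⊤ * lcs n (i + 1) := by
  obtain ⟨j, rfl⟩ : ∃ j, i = j + 2 := ⟨i - 2, by omega⟩
  have hb' : b ∈ lcs n (j + 1) := hb
  set c : FreeAlgebra ℂ (Fin n) := x * b - b * x with hc
  have hcmem : c ∈ lcs n (j + 2) :=
    Submodule.subset_span ⟨x, b, hb', rfl⟩
  have he1 : (y * a) * c - c * (y * a) ∈ lcs n (j + 3) :=
    Submodule.subset_span ⟨y * a, c, hcmem, rfl⟩
  have he2 : a * c - c * a ∈ lcs n (j + 3) :=
    Submodule.subset_span ⟨a, c, hcmem, rfl⟩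
  have key : y * x * (a * b - b * a) - x * ((y * a) * b - b * (y * a))
        - y * ((x * a) * b - b * (x * a)) + ((x * y * a) * b - b * (x * y * a))
      = -((y * a) * c - c * (y * a)) + y * (a * c - c * a) := by
    rw [hc]; noncomm_ring
  rw [key]
  have h1 : (y * a) * c - c * (y * a) ∈ ⊤ * lcs n (j + 3) := by
    have := Submodule.mul_mem_mul (Submodule.mem_top (R := ℂ)
      (x := (1 : FreeAlgebra ℂ (Fin n)))) he1
    simpa using this
  have h2 : y * (a * c - c * a) ∈ ⊤ * lcs n (j + 3) :=
    Submodule.mul_mem_mul Submodule.mem_top he2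
  exact Submodule.add_mem _ (Submodule.neg_mem _ h1) h2
end

section
/- Let A_n be the free associative algebra over ℂ on generators x_1,…,x_n with lower central series L_i, let M_i = A_n·L_i·A_n be the two-sided ideal generated by L_i, and let V ⊆ A_n be the linear span of 1 and x_1,…,x_n (the elements of degree ≤ 1). Then for every i ≥ 1, M_i = V·L_i + M_{i+1}, where V·L_i is the linear span of products vl with v ∈ V, l ∈ L_i. -/
/-- `V`, the span of `1` and the generators `x_1, …, x_n`
(the elements of degree at most `1`). -/
noncomputable def Vsub (n : ℕ) : Submodule ℂ (FreeAlgebra ℂ (Fin n)) :=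
  Submodule.span ℂ (insert 1 (Set.range (FreeAlgebra.ι ℂ)))

namespace MVLaux

open Submodule Pointwise

variable {n : ℕ}

local notation "A" => FreeAlgebra ℂ (Fin n)

lemma lcs_succ_succ (k : ℕ) :
    lcs n (k + 2) = Submodule.span ℂ
      {x | ∃ a : A, ∃ l ∈ lcs n (k + 1), x = a * l - l * a} := by
  rw [lcs]

lemma one_mem_V : (1 : A) ∈ Vsub n :=
  subset_span (Set.mem_insert _ _)

lemma ι_mem_V (x : Fin n) : FreeAlgebra.ι ℂ x ∈ Vsub n :=
  subset_span (Set.mem_insert_of_mem _ ⟨x, rfl⟩)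

lemma mem_lcs_of_comm {k : ℕ} (a : A) {l : A} (hl : l ∈ lcs n (k + 1)) :
    a * l - l * a ∈ lcs n (k + 2) := by
  rw [lcs_succ_succ]
  exact subset_span ⟨a, l, hl, rfl⟩

lemma lcs_le_Mideal (j : ℕ) : lcs n j ≤ Mideal n j := fun c hc => by
  have h1 : (1 : A) ∈ (⊤ : Submodule ℂ A) := mem_top
  have := Submodule.mul_mem_mul (Submodule.mul_mem_mul h1 hc) h1
  simpa [Mideal] using this

lemma Mideal_mul_right {j : ℕ} {x : A} (hx : x ∈ Mideal n j) (c : A) :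
    x * c ∈ Mideal n j := by
  have htt : (⊤ : Submodule ℂ A) * ⊤ = ⊤ := by
    refine le_antisymm le_top fun z _ => ?_
    have := Submodule.mul_mem_mul (show z ∈ (⊤ : Submodule ℂ A) from mem_top) (show (1 : A) ∈ (⊤ : Submodule ℂ A) from mem_top)
    simpa using this
  have : x * c ∈ Mideal n j * ⊤ := Submodule.mul_mem_mul hx mem_top
  rwa [Mideal, mul_assoc (⊤ * lcs n j) ⊤ ⊤, htt] at this

lemma Mideal_mul_left {j : ℕ} {x : A} (hx : x ∈ lcs n j) (c : A) :
    c * x ∈ Mideal n j := by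
  have h := Submodule.mul_mem_mul (Submodule.mul_mem_mul (show c ∈ (⊤ : Submodule ℂ A) from mem_top) hx)
    (show (1 : A) ∈ (⊤ : Submodule ℂ A) from mem_top)
  simpa [Mideal] using h

lemma top_eq_span_closure :
    (⊤ : Submodule ℂ A) =
      Submodule.span ℂ (Submonoid.closure (Set.range (FreeAlgebra.ι ℂ : Fin n → A)) : Set A) := by
  refine le_antisymm (fun x _ => ?_) le_top
  refine FreeAlgebra.induction ℂ (Fin n) ?_ ?_ ?_ ?_ x
  · intro r
    rw [Algebra.algebraMap_eq_smul_one]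
    exact smul_mem _ _ (subset_span (Submonoid.one_mem _))
  · intro y
    exact subset_span (Submonoid.subset_closure ⟨y, rfl⟩)
  · intro a b ha hb
    have h := Submodule.mul_mem_mul ha hb
    rw [Submodule.span_mul_span] at h
    refine span_le.2 ?_ h
    rintro _ ⟨p, hp, q, hq, rfl⟩
    exact subset_span (Submonoid.mul_mem _ hp hq)
  · intro a b ha hb
    exact add_mem ha hb

section Main

variable (k : ℕ)

/-- The main inclusion for `i = k+2`. -/
lemma main_le (k : ℕ) :
    Mideal n (k + 2) ≤ Vsub n * lcs n (k + 2) ⊔ Mideal n (k + 3) := by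
  set K : Submodule ℂ A := Vsub n * lcs n (k + 2) ⊔ Mideal n (k + 3) with hK
  -- membership of V * L in K
  have hVLK : ∀ (v : A), v ∈ Vsub n → ∀ (l : A), l ∈ lcs n (k + 2) → v * l ∈ K :=
    fun _ hv _ hl => Submodule.mem_sup_left (Submodule.mul_mem_mul hv hl)
  have hLK : ∀ (l : A), l ∈ lcs n (k + 2) → l ∈ K := fun l hl => by
    have := hVLK 1 one_mem_V l hl
    rwa [one_mul] at this
  have hMK : Mideal n (k + 3) ≤ K := le_sup_right
  -- Step 1: monomial multipliers
  have hB'' : ∀ m ∈ Submonoid.closure (Set.range (FreeAlgebra.ι ℂ)),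
      ∀ (b u : A), u ∈ lcs n (k + 1) → m * (b * u - u * b) ∈ K := by
    intro m hm
    induction hm using Submonoid.closure_induction with
    | mem x hx =>
        rintro b u hu
        obtain ⟨y, rfl⟩ := hx
        exact hVLK _ (ι_mem_V y) _ (mem_lcs_of_comm b hu)
    | one =>
        intro b u hu
        rw [one_mul]
        exact hLK _ (mem_lcs_of_comm b hu)
    | mul m₁ m₂ hm₁ hm₂ ih₁ ih₂ =>
        intro b u hu
        have hl' : b * u - u * b ∈ lcs n (k + 2) := mem_lcs_of_comm b hu
        -- T1 : m₁ * [m₂, [b,u]] ∈ M_{i+1}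
        have hgen2 : m₂ * (b * u - u * b) - (b * u - u * b) * m₂ ∈ lcs n (k + 3) :=
          mem_lcs_of_comm m₂ hl'
        have hT1 : m₁ * (m₂ * (b * u - u * b) - (b * u - u * b) * m₂) ∈ Mideal n (k + 3) :=
          Mideal_mul_left hgen2 m₁
        -- T2 : m₁ * [b*m₂, u] ∈ K by IH₁
        have hT2 : m₁ * ((b * m₂) * u - u * (b * m₂)) ∈ K := ih₁ (b * m₂) u hu
        -- T3a : m₂ * [m₁*b, u] ∈ K by IH₂
        have hT3a : m₂ * ((m₁ * b) * u - u * (m₁ * b)) ∈ K := ih₂ (m₁ * b) u hu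
        -- T3b : [m₂, [m₁*b, u]] ∈ L_{i+1} ⊆ M_{i+1}
        have hg : (m₁ * b) * u - u * (m₁ * b) ∈ lcs n (k + 2) := mem_lcs_of_comm (m₁ * b) hu
        have hT3b : m₂ * ((m₁ * b) * u - u * (m₁ * b)) - ((m₁ * b) * u - u * (m₁ * b)) * m₂
            ∈ Mideal n (k + 3) := lcs_le_Mideal (k + 3) (mem_lcs_of_comm m₂ hg)
        -- T4 : [m₁*b*m₂, u] ∈ L_i
        have hT4 : (m₁ * b * m₂) * u - u * (m₁ * b * m₂) ∈ lcs n (k + 2) :=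
          mem_lcs_of_comm (m₁ * b * m₂) hu
        have heq : m₁ * m₂ * (b * u - u * b) =
            m₁ * (m₂ * (b * u - u * b) - (b * u - u * b) * m₂)
            + m₁ * ((b * m₂) * u - u * (b * m₂))
            + (m₂ * ((m₁ * b) * u - u * (m₁ * b))
               - (m₂ * ((m₁ * b) * u - u * (m₁ * b)) - ((m₁ * b) * u - u * (m₁ * b)) * m₂))
            - ((m₁ * b * m₂) * u - u * (m₁ * b * m₂)) := by noncomm_ring
        rw [heq]
        exact sub_mem (add_mem (add_mem (hMK hT1) hT2) (sub_mem hT3a (hMK hT3b))) (hLK _ hT4)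
  -- Step 2: arbitrary multipliers
  have hB' : ∀ (a b u : A), u ∈ lcs n (k + 1) → a * (b * u - u * b) ∈ K := by
    intro a b u hu
    have ha : a ∈ Submodule.span ℂ
        (Submonoid.closure (Set.range (FreeAlgebra.ι ℂ : Fin n → A)) : Set A) := by
      rw [← top_eq_span_closure]; exact mem_top
    induction ha using Submodule.span_induction with
    | mem x hx => exact hB'' x hx b u hu
    | zero => simp only [zero_mul]; exact zero_mem K
    | add x y _ _ hx hy => rw [add_mul]; exact add_mem hx hy
    | smul r x _ hx => rw [smul_mul_assoc]; exact smul_mem _ _ hx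
  -- Step 3: ⊤ * L ≤ K
  have hAL : (⊤ : Submodule ℂ A) * lcs n (k + 2) ≤ K := by
    refine Submodule.mul_le.2 fun a _ l hl => ?_
    rw [lcs_succ_succ] at hl
    induction hl using Submodule.span_induction with
    | mem x hx =>
        obtain ⟨b, u, hu, rfl⟩ := hx
        exact hB' a b u hu
    | zero => simp only [mul_zero]; exact zero_mem K
    | add x y _ _ hx hy => rw [mul_add]; exact add_mem hx hy
    | smul r x _ hx => rw [mul_smul_comm]; exact smul_mem _ _ hx
  -- Step 4: right multiplication by a generator preserves V*L (inside K)
  have hVLy : ∀ (y : Fin n), ∀ p ∈ Vsub n * lcs n (k + 2), p * FreeAlgebra.ι ℂ y ∈ K := by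
    intro y p hp
    have hspan : Vsub n * lcs n (k + 2) =
        Submodule.span ℂ ((insert 1 (Set.range (FreeAlgebra.ι ℂ)) : Set A) *
          {x : A | ∃ a : A, ∃ l ∈ lcs n (k + 1), x = a * l - l * a}) := by
      rw [Vsub, lcs_succ_succ, Submodule.span_mul_span]
    rw [hspan] at hp
    induction hp using Submodule.span_induction with
    | mem x hx =>
        obtain ⟨v, hv, s, hs, rfl⟩ := hx
        obtain ⟨b, u, hu, rfl⟩ := hs
        have hVv : v ∈ Vsub n := subset_span hv
        have h1 : v * ((b * FreeAlgebra.ι ℂ y) * u - u * (b * FreeAlgebra.ι ℂ y)) ∈ K :=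
          hVLK _ hVv _ (mem_lcs_of_comm (b * FreeAlgebra.ι ℂ y) hu)
        have hneg : u * FreeAlgebra.ι ℂ y - FreeAlgebra.ι ℂ y * u ∈ lcs n (k + 2) := by
          have := mem_lcs_of_comm (FreeAlgebra.ι ℂ y) hu
          have h' := neg_mem this
          rwa [neg_sub] at h'
        have h2 : (v * b) * (u * FreeAlgebra.ι ℂ y - FreeAlgebra.ι ℂ y * u) ∈ K :=
          hAL (Submodule.mul_mem_mul mem_top hneg)
        have heq : (v * (b * u - u * b)) * FreeAlgebra.ι ℂ y =
            v * ((b * FreeAlgebra.ι ℂ y) * u - u * (b * FreeAlgebra.ι ℂ y))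
            + (v * b) * (u * FreeAlgebra.ι ℂ y - FreeAlgebra.ι ℂ y * u) := by noncomm_ring
        rw [heq]
        exact add_mem h1 h2
    | zero => simp only [zero_mul]; exact zero_mem K
    | add x z _ _ hx hz => rw [add_mul]; exact add_mem hx hz
    | smul r x _ hx => rw [smul_mul_assoc]; exact smul_mem _ _ hx
  -- Step 5: K is stable under right multiplication by generators
  have hKy : ∀ (y : Fin n), ∀ x ∈ K, x * FreeAlgebra.ι ℂ y ∈ K := by
    intro y x hx
    rcases Submodule.mem_sup.1 hx with ⟨p, hp, q, hq, rfl⟩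
    rw [add_mul]
    exact add_mem (hVLy y p hp) (hMK (Mideal_mul_right hq _))
  -- Step 6: K is stable under right multiplication by anything
  have hKc : ∀ (c : A), ∀ x ∈ K, x * c ∈ K := by
    intro c
    have hc : c ∈ Submodule.span ℂ
        (Submonoid.closure (Set.range (FreeAlgebra.ι ℂ : Fin n → A)) : Set A) := by
      rw [← top_eq_span_closure]; exact mem_top
    induction hc using Submodule.span_induction with
    | mem m hm =>
        induction hm using Submonoid.closure_induction with
        | mem z hz =>
            obtain ⟨y, rfl⟩ := hz
            exact hKy y
        | one => intro x hx; rwa [mul_one]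
        | mul c₁ c₂ hc₁ hc₂ ih₁ ih₂ =>
            intro x hx
            rw [← mul_assoc]
            exact ih₂ _ (ih₁ x hx)
    | zero => intro x _; rw [mul_zero]; exact zero_mem K
    | add c₁ c₂ _ _ ih₁ ih₂ =>
        intro x hx
        rw [mul_add]
        exact add_mem (ih₁ x hx) (ih₂ x hx)
    | smul r c₁ _ ih =>
        intro x hx
        rw [mul_smul_comm]
        exact smul_mem _ _ (ih x hx)
  -- Conclusion
  show (⊤ : Submodule ℂ A) * lcs n (k + 2) * ⊤ ≤ K
  exact Submodule.mul_le.2 fun p hp c _ => hKc c p (hAL hp)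

end Main

lemma lcs_succ_le (k : ℕ) : lcs n (k + 2) ≤ lcs n (k + 1) := by
  induction k with
  | zero => exact le_top
  | succ k ih =>
      rw [lcs_succ_succ]
      refine span_le.2 ?_
      rintro _ ⟨a, l, hl, rfl⟩
      exact mem_lcs_of_comm a (ih hl)

lemma le_mul_top (X : Submodule ℂ A) : X ≤ X * ⊤ := fun x hx => by
  have := Submodule.mul_mem_mul hx (show (1 : A) ∈ (⊤ : Submodule ℂ A) from mem_top)
  simpa using this

lemma sup_le_Mideal (i : ℕ) (hi : 1 ≤ i) :
    Vsub n * lcs n i ⊔ Mideal n (i + 1) ≤ Mideal n i := by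
  refine sup_le ?_ ?_
  · calc Vsub n * lcs n i ≤ ⊤ * lcs n i := mul_le_mul' le_top le_rfl
      _ ≤ ⊤ * lcs n i * ⊤ := le_mul_top _
  · obtain ⟨k, rfl⟩ : ∃ k, i = k + 1 := ⟨i - 1, (Nat.succ_pred_eq_of_pos hi).symm⟩
    exact mul_le_mul' (mul_le_mul' le_rfl (lcs_succ_le k)) le_rfl

end MVLaux

/-- For every `i ≥ 1`, `M_i = V·L_i + M_{i+1}`. -/
theorem Mideal_eq_VL_sup (n : ℕ) (i : ℕ) (hi : 1 ≤ i) :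
    Mideal n i = Vsub n * lcs n i ⊔ Mideal n (i + 1) := by
  refine le_antisymm ?_ (MVLaux.sup_le_Mideal i hi)
  obtain ⟨j, rfl⟩ : ∃ j, i = j + 1 := ⟨i - 1, (Nat.succ_pred_eq_of_pos hi).symm⟩
  cases j with
  | zero =>
      have htop : (⊤ : Submodule ℂ (FreeAlgebra ℂ (Fin n))) ≤ Vsub n * lcs n 1 := by
        intro x _
        have h1 : (1 : FreeAlgebra ℂ (Fin n)) ∈ Vsub n := MVLaux.one_mem_V
        have hx : x ∈ lcs n 1 := Submodule.mem_top
        have := Submodule.mul_mem_mul h1 hx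
        simpa using this
      exact le_trans le_top (le_trans htop le_sup_left)
  | succ k => exact MVLaux.main_le k
end
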